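/- Let k ≥ 2 be even, N ≥ 1, and Γ = Γ₀(N) = {[[a,b],[c,d]] ∈ SL₂(ℤ) : c ≡ 0 mod N} (note εΓ₀(N)ε = Γ₀(N)). Then (C_w^Γ)^− = {0} if and only if N = 2^e·N' with N' odd and squarefree and 0 ≤ e ≤ 3. -/

import Mathlib

noncomputable section

open Matrix Polynomial Finset Filter MeasureTheory

abbrev SL2Z := Matrix.SpecialLinearGroup (Fin 2) ℤ

def mc (g : SL2Z) (i j : Fin 2) : ℂ := ((g : Matrix (Fin 2) (Fin 2) ℤ) i j : ℂ)

def Sm : SL2Z := ⟨!![0, -1; 1, 0], by norm_num [Matrix.det_fin_two_of]⟩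
def Tm : SL2Z := ⟨!![1, 1; 0, 1], by norm_num [Matrix.det_fin_two_of]⟩
def Um : SL2Z := Tm * Sm

def negSL (A : SL2Z) : SL2Z := ⟨-A.1, by simp [Matrix.det_neg, A.2]⟩

/-- weight `-w` right action of `g` on polynomials of degree at most `w`:
`(P|g)(X) = (cX+d)^w P((aX+b)/(cX+d))`. -/
def pSlash (w : ℕ) (P : Polynomial ℂ) (g : SL2Z) : Polynomial ℂ :=
  ∑ n ∈ Finset.range (w + 1),
    C (P.coeff n) * (C (mc g 0 0) * X + C (mc g 0 1)) ^ n *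
      (C (mc g 1 0) * X + C (mc g 1 1)) ^ (w - n)

/-- right action of `g` on families `P : Γ₁ → V_w`: `(P|g)(A) = P(Ag⁻¹)|g`. -/
def famSlash (w : ℕ) (P : SL2Z → Polynomial ℂ) (g : SL2Z) : SL2Z → Polynomial ℂ :=
  fun A => pSlash w (P (A * g⁻¹)) g

/-- membership in the induced module `V_w^Γ`. -/
structure MemV (Γ : Subgroup SL2Z) (w : ℕ) (P : SL2Z → Polynomial ℂ) : Prop where
  deg : ∀ A, (P A).degree ≤ (w : ℕ)
  inv : ∀ γ ∈ Γ, ∀ A, P (γ * A) = P A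
  parity : ∀ A, P (negSL A) = (-1 : ℂ) ^ w • P A

/-- the space of period polynomials `W_w^Γ`. -/
def MemW (Γ : Subgroup SL2Z) (w : ℕ) (P : SL2Z → Polynomial ℂ) : Prop :=
  MemV Γ w P ∧ (∀ A, P A + famSlash w P Sm A = 0) ∧
    (∀ A, P A + famSlash w P Um A + famSlash w P (Um * Um) A = 0)

/-- the space of coboundary polynomials `C_w^Γ = {P|(1-S) : P ∈ V_w^Γ, P|T = P}`. -/
def MemC (Γ : Subgroup SL2Z) (w : ℕ) (Q : SL2Z → Polynomial ℂ) : Prop :=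
  ∃ P, MemV Γ w P ∧ (∀ A, famSlash w P Tm A = P A) ∧ ∀ A, Q A = P A - famSlash w P Sm A

def uhp : Set ℂ := {z | 0 < z.im}

/-- the weight `k` slash action on functions. -/
def slashk (k : ℤ) (g : SL2Z) (f : ℂ → ℂ) : ℂ → ℂ := fun z =>
  (mc g 1 0 * z + mc g 1 1) ^ (-k) *
    f ((mc g 0 0 * z + mc g 0 1) / (mc g 1 0 * z + mc g 1 1))

/-- cusp forms of weight `k` for `Γ`. -/
structure IsCuspForm (Γ : Subgroup SL2Z) (k : ℤ) (f : ℂ → ℂ) : Prop where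
  holo : DifferentiableOn ℂ f uhp
  trans : ∀ γ ∈ Γ, ∀ z ∈ uhp, slashk k γ f z = f z
  decay : ∀ A : SL2Z, Tendsto (slashk k A f) (Filter.comap Complex.im atTop) (nhds 0)

/-- the period polynomial `ρ_f(A) = ∫₀^{i∞} (f|A)(t)(t-X)^w dt`, via its coefficients. -/
def rho (k : ℤ) (w : ℕ) (f : ℂ → ℂ) (A : SL2Z) : Polynomial ℂ :=
  ∑ m ∈ Finset.range (w + 1),
    C ((-1 : ℂ) ^ m * (w.choose m : ℂ) * Complex.I ^ (w - m + 1) *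
        ∫ y in Set.Ioi (0 : ℝ), slashk k A f (Complex.I * y) * (y : ℂ) ^ (w - m)) * X ^ m

/-- the pairing `⟨·,·⟩` on `V_w`. -/
def pairV (w : ℕ) (P Q : Polynomial ℂ) : ℂ :=
  ∑ n ∈ Finset.range (w + 1),
    (-1 : ℂ) ^ (w - n) * ((w.choose n : ℂ))⁻¹ * P.coeff n * Q.coeff (w - n)

/-- the pairing `⟪·,·⟫` on `V_w^Γ`, w.r.t. a set `Rt` of coset representatives for `Γ\Γ₁`. -/
def pairG (Γ : Subgroup SL2Z) (w : ℕ) (Rt : Finset SL2Z) (P Q : SL2Z → Polynomial ℂ) : ℂ :=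
  ((Γ.index : ℂ))⁻¹ * ∑ A ∈ Rt, pairV w (P A) (Q A)

/-- the pairing `{P,Q} = ⟪P|(T-T⁻¹),Q⟫`. -/
def brk (Γ : Subgroup SL2Z) (w : ℕ) (Rt : Finset SL2Z) (P Q : SL2Z → Polynomial ℂ) : ℂ :=
  pairG Γ w Rt (fun A => famSlash w P Tm A - famSlash w P Tm⁻¹ A) Q

/-- `Rt` is a set of representatives for the right cosets `Γ\Γ₁`. -/
def IsTransversal (Γ : Subgroup SL2Z) (Rt : Finset SL2Z) : Prop :=
  Subgroup.IsComplement (Γ : Set SL2Z) (Rt : Set SL2Z)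

/-- the standard fundamental domain for `SL₂(ℤ)` in the upper half plane. -/
def fundDom : Set ℂ := {z | 0 < z.im ∧ 1 ≤ ‖z‖ ∧ |z.re| ≤ 1 / 2}

/-- the Petersson product w.r.t. a set `Rt` of coset representatives for `Γ\Γ₁`. -/
def petersson (Γ : Subgroup SL2Z) (k : ℤ) (Rt : Finset SL2Z) (f g : ℂ → ℂ) : ℂ :=
  ((Γ.index : ℂ))⁻¹ * ∑ A ∈ Rt, ∫ z in fundDom,
    slashk k A f z * (starRingEnd ℂ) (slashk k A g z) * (z.im : ℂ) ^ (k - 2)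

def Ck (k : ℤ) : ℂ := -(2 * Complex.I) ^ (k - 1)

/-- conjugation of `A` by `ε = [[-1,0],[0,1]]`. -/
def epsConj (A : SL2Z) : SL2Z :=
  ⟨!![A.1 0 0, -A.1 0 1; -A.1 1 0, A.1 1 1], by
    have h := A.2
    rw [Matrix.det_fin_two] at h
    rw [Matrix.det_fin_two_of]
    linear_combination h⟩

/-- the involution `(P|ε)(A)(X) = P(εAε)(-X)` of `V_w^Γ`. -/
def epsAct (w : ℕ) (P : SL2Z → Polynomial ℂ) : SL2Z → Polynomial ℂ :=
  fun A => (P (epsConj A)).comp (-X)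

/-- `P^± = (P ± P|ε)/2`, where `s = ±1`. -/
def pm (w : ℕ) (s : ℂ) (P : SL2Z → Polynomial ℂ) : SL2Z → Polynomial ℂ :=
  fun A => (2 : ℂ)⁻¹ • (P A + s • epsAct w P A)

/-- coefficientwise complex conjugation. -/
def conjFam (P : SL2Z → Polynomial ℂ) : SL2Z → Polynomial ℂ :=
  fun A => (P A).map (starRingEnd ℂ)

/-- the periods `r_{A,n}(f)`, extracted from any `P ∈ V_w^Γ` by
`P(A)(X) = Σₙ (-1)^{w-n} binom(w,n) r_{A,n} X^{w-n}`. -/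
def per (w : ℕ) (P : SL2Z → Polynomial ℂ) (A : SL2Z) (n : ℕ) : ℂ :=
  (-1 : ℂ) ^ (w - n) * ((w.choose n : ℂ))⁻¹ * (P A).coeff (w - n)

/-! If `P|T = P`, each `P(A)` is a polynomial invariant under `X ↦ X + M`, because
`A T^M A⁻¹ ∈ Γ(M) ≤ Γ`; so `P(A)` is a constant `c(A)`, and `C_w^Γ` consists of the
`Q(A) = c(A) - c(AS⁻¹) X^w` with `c` a function on `Γ \ SL₂(ℤ) / ⟨T⟩`, i.e. on the cusps.
For even `w`, `Q|ε` is the `Q` of `c ∘ (A ↦ εAε)`. Hence `(C_w^Γ)⁻ = 0` iff `ε` fixes every cusp: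
if it does, `Q|ε = Q`; if it moves the cusp of `A₀`, the indicator of that cusp minus its
`ε`-image gives an element of `(C_w^Γ)⁻`, nonzero because otherwise `c` would be right invariant
under `S` and `T`, which generate `SL₂(ℤ)`.

For `Γ₀(N)` the cusp of `[[a, b], [c, d]]` is `ε`-fixed iff `c²n + 2cd ≡ 0 (mod N)` is
solvable, i.e. `gcd(c², N) ∣ 2cd`. This holds for all matrices iff `gcd(m², N) ∣ 2m` for all
`m`, and comparing `p`-adic valuations turns that into `N = 2^e N'` with `N'` odd squarefree
and `e ≤ 3`. -/

open CongruenceSubgroup ModularGroup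

lemma Tm_eq_T : Tm = T := rfl

lemma Sm_eq_S : Sm = S := rfl

lemma negSL_eq_neg_one_mul (A : SL2Z) : negSL A = -1 * A := by
  ext i j
  simp [negSL]

lemma neg_one_mem_Gamma0 (N : ℕ) : (-1 : SL2Z) ∈ Gamma0 N := by
  simp

@[simp]
lemma coe_epsConj (A : SL2Z) :
    (epsConj A : Matrix (Fin 2) (Fin 2) ℤ) = !![A 0 0, -A 0 1; -A 1 0, A 1 1] := rfl

lemma epsConj_mul (A B : SL2Z) : epsConj (A * B) = epsConj A * epsConj B := by
  ext i j
  fin_cases i <;> fin_cases j <;> simp [Matrix.mul_apply, Fin.sum_univ_two] <;> ring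

lemma epsConj_epsConj (A : SL2Z) : epsConj (epsConj A) = A := by
  ext i j
  fin_cases i <;> fin_cases j <;> simp

lemma epsConj_T : epsConj T = T⁻¹ := by
  ext i j
  fin_cases i <;> fin_cases j <;> simp

lemma epsConj_S_inv : epsConj S⁻¹ = S := by
  ext i j
  fin_cases i <;> fin_cases j <;> simp [S_inv]

lemma epsConj_mem_Gamma0 {N : ℕ} {γ : SL2Z} (hγ : γ ∈ Gamma0 N) : epsConj γ ∈ Gamma0 N := by
  simpa using hγ

lemma mul_inv_mem_Gamma0_iff (N : ℕ) (A B : SL2Z) :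
    B * A⁻¹ ∈ Gamma0 N ↔ (N : ℤ) ∣ B 1 0 * A 1 1 - B 1 1 * A 1 0 := by
  have hentry : (B * A⁻¹) 1 0 = B 1 0 * A 1 1 - B 1 1 * A 1 0 := by
    simp [Matrix.SpecialLinearGroup.coe_inv, adjugate_fin_two, mul_apply, Fin.sum_univ_two,
      sub_eq_add_neg, mul_comm]
  rw [Gamma0_mem, hentry, ZMod.intCast_zmod_eq_zero_iff_dvd]

/-- With `-1 ∈ Γ`, the double cosets `Γ \ SL₂(ℤ) / ⟨T⟩` are the cusps of `Γ`. -/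
abbrev cusp (Γ : Subgroup SL2Z) (A : SL2Z) :
    DoubleCoset.Quotient (Γ : Set SL2Z) (Subgroup.zpowers T) :=
  DoubleCoset.mk Γ (Subgroup.zpowers T) A

lemma cusp_eq_iff {Γ : Subgroup SL2Z} {A B : SL2Z} :
    cusp Γ A = cusp Γ B ↔ ∃ n : ℤ, B * T ^ n * A⁻¹ ∈ Γ := by
  rw [DoubleCoset.eq]
  constructor
  · rintro ⟨γ, hγ, _, ⟨n, rfl⟩, rfl⟩
    exact ⟨-n, by simpa [mul_assoc, ← _root_.zpow_add] using hγ⟩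
  · rintro ⟨n, h⟩
    exact ⟨_, h, T ^ (-n), ⟨-n, rfl⟩, by group⟩

lemma cusp_mul_left {Γ : Subgroup SL2Z} {γ : SL2Z} (hγ : γ ∈ Γ) (A : SL2Z) :
    cusp Γ (γ * A) = cusp Γ A :=
  (DoubleCoset.eq _ _ _ _).mpr ⟨γ⁻¹, inv_mem hγ, 1, one_mem _, by group⟩

lemma cusp_mul_T (Γ : Subgroup SL2Z) (A : SL2Z) : cusp Γ (A * T) = cusp Γ A :=
  (DoubleCoset.eq _ _ _ _).mpr ⟨1, one_mem _, T⁻¹, inv_mem (Subgroup.mem_zpowers T), by group⟩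

def rightStabilizer {G α : Type*} [Group G] (c : G → α) : Subgroup G where
  carrier := {g | ∀ A, c (A * g) = c A}
  mul_mem' {g h} hg hh A := by rw [← mul_assoc, hh, hg]
  one_mem' A := by rw [mul_one]
  inv_mem' {g} hg A := by rw [← hg (A * g⁻¹), inv_mul_cancel_right]

lemma apply_eq_of_S_mem_of_T_mem {α : Type*} {c : SL2Z → α} (hS : S ∈ rightStabilizer c)
    (hT : T ∈ rightStabilizer c) (A B : SL2Z) : c A = c B := by
  have htop : rightStabilizer c = ⊤ := by
    rw [eq_top_iff, ← SpecialLinearGroup.SL2Z_generators, Subgroup.closure_le]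
    simp [Set.insert_subset_iff, hS, hT]
  have hconst (g : SL2Z) : c g = c 1 := by
    simpa using (htop ▸ Subgroup.mem_top g : g ∈ rightStabilizer c) 1
  rw [hconst A, hconst B]

structure IsCuspFunction (Γ : Subgroup SL2Z) (c : SL2Z → ℂ) : Prop where
  mul_left : ∀ γ ∈ Γ, ∀ A, c (γ * A) = c A
  T_mem : T ∈ rightStabilizer c

namespace IsCuspFunction

variable {Γ : Subgroup SL2Z} {c c' : SL2Z → ℂ}

lemma eq_of_cusp_eq (hc : IsCuspFunction Γ c) {A B : SL2Z} (h : cusp Γ A = cusp Γ B) :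
    c A = c B := by
  obtain ⟨n, hn⟩ := cusp_eq_iff.mp h
  calc c A = c (B * T ^ n * A⁻¹ * A) := (hc.mul_left _ hn A).symm
    _ = c B := by rw [inv_mul_cancel_right, zpow_mem hc.T_mem n]

lemma of_comp_cusp (f : DoubleCoset.Quotient (Γ : Set SL2Z) (Subgroup.zpowers T) → ℂ) :
    IsCuspFunction Γ (f ∘ cusp Γ) where
  mul_left γ hγ A := by simp [cusp_mul_left hγ]
  T_mem A := by simp [cusp_mul_T]

lemma sub (hc : IsCuspFunction Γ c) (hc' : IsCuspFunction Γ c') : IsCuspFunction Γ (c - c') where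
  mul_left γ hγ A := by simp [hc.mul_left γ hγ, hc'.mul_left γ hγ]
  T_mem A := by simp [hc.T_mem A, hc'.T_mem A]

lemma comp_epsConj (hε : ∀ γ ∈ Γ, epsConj γ ∈ Γ) (hc : IsCuspFunction Γ c) :
    IsCuspFunction Γ (c ∘ epsConj) where
  mul_left γ hγ A := by simp [epsConj_mul, hc.mul_left _ (hε γ hγ)]
  T_mem A := by simp [epsConj_mul, epsConj_T, inv_mem hc.T_mem (epsConj A)]

lemma mul_S_inv (hc : IsCuspFunction Γ c) (h1 : -1 ∈ Γ) (A : SL2Z) : c (A * S⁻¹) = c (A * S) := by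
  rw [S_inv, mul_neg, ← neg_one_mul, hc.mul_left _ h1]

end IsCuspFunction

lemma Polynomial.eq_C_eval_zero_of_comp_X_add_natCast {R : Type*} [CommRing R] [IsDomain R]
    [CharZero R] {p : R[X]} {n : ℕ} (hn : n ≠ 0) (h : p.comp (X + (n : R[X])) = p) :
    p = C (p.eval 0) := by
  have hmul (k : ℕ) : p.eval ((k : R) * n) = p.eval 0 := by
    induction k with
    | zero => simp
    | succ k ih =>
      have hshift := congrArg (eval ((k : R) * n)) h
      simp only [eval_comp, eval_add, eval_X, eval_natCast] at hshift
      rw [Nat.cast_succ, add_one_mul, hshift, ih]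
  apply eq_of_infinite_eval_eq
  refine Set.infinite_of_injective_forall_mem (f := fun k : ℕ => (k : R) * n) ?_ (by simp [hmul])
  intro a b hab
  exact_mod_cast mul_right_cancel₀ (Nat.cast_ne_zero.mpr hn) hab

lemma pSlash_C (w : ℕ) (a : ℂ) (g : SL2Z) :
    pSlash w (C a) g = C a * (C (mc g 1 0) * X + C (mc g 1 1)) ^ w := by
  rw [pSlash, Finset.sum_eq_single 0 (fun n _ hn => by simp [coeff_C, hn]) (by simp)]
  simp

lemma pSlash_C_T (w : ℕ) (a : ℂ) : pSlash w (C a) T = C a := by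
  simp [pSlash_C, mc]

lemma pSlash_C_S (w : ℕ) (a : ℂ) : pSlash w (C a) S = C a * X ^ w := by
  simp [pSlash_C, mc]

lemma pSlash_T {w : ℕ} {p : ℂ[X]} (hp : p.natDegree ≤ w) : pSlash w p T = p.comp (X + 1) := by
  rw [Polynomial.comp, eval₂_eq_sum, sum_over_range' _ (by simp) (w + 1) (by omega), pSlash]
  refine Finset.sum_congr rfl fun n _ => ?_
  simp [mc]

lemma MemV.eq_C_of_slash_T {Γ : Subgroup SL2Z} (hΓ : IsCongruenceSubgroup Γ) {w : ℕ}
    {P : SL2Z → ℂ[X]} (hP : MemV Γ w P) (hPT : ∀ A, famSlash w P T A = P A) (A : SL2Z) :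
    P A = C ((P A).eval 0) := by
  obtain ⟨M, hM, hΓM⟩ := hΓ
  have hstep (B : SL2Z) : P B = (P (B * T⁻¹)).comp (X + 1) := by
    rw [← hPT B, famSlash, pSlash_T (natDegree_le_iff_degree_le.mpr (hP.deg _))]
  have hiter (n : ℕ) : P A = (P (A * T⁻¹ ^ n)).comp (X + (n : ℂ[X])) := by
    induction n with
    | zero => simp
    | succ n ih =>
      rw [ih, hstep (A * _), comp_assoc, mul_assoc, ← pow_succ]
      congr 1
      simp only [Polynomial.add_comp, X_comp, one_comp, Nat.cast_succ]
      ring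
  have hconj : A * T⁻¹ ^ M * A⁻¹ ∈ Γ := by
    refine hΓM ((Gamma_normal M).conj_mem _ ?_ A)
    simpa [_root_.zpow_neg] using ModularGroup_T_pow_mem_Gamma M (-M) (by simp)
  have hper : P (A * T⁻¹ ^ M) = P A := by
    simpa using hP.inv _ hconj A
  have hperiodic := hiter M
  rw [hper] at hperiodic
  exact Polynomial.eq_C_eval_zero_of_comp_X_add_natCast hM hperiodic.symm

/-- `P - P|S` for the constant family `P A = c A`. -/
def constCoboundary (w : ℕ) (c : SL2Z → ℂ) : SL2Z → ℂ[X] :=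
  fun A => C (c A) - C (c (A * S⁻¹)) * X ^ w

lemma constCoboundary_neg (w : ℕ) (c : SL2Z → ℂ) :
    constCoboundary w (-c) = -constCoboundary w c := by
  funext A
  simp [constCoboundary, neg_add_eq_sub]

section Coboundary

variable {Γ : Subgroup SL2Z} {w : ℕ}

lemma MemC.exists_isCuspFunction (hΓ : IsCongruenceSubgroup Γ) {Q : SL2Z → ℂ[X]}
    (hQ : MemC Γ w Q) : ∃ c, IsCuspFunction Γ c ∧ Q = constCoboundary w c := by
  obtain ⟨P, hP, hPT, hQP⟩ := hQ
  have hconst := hP.eq_C_of_slash_T hΓ hPT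
  refine ⟨fun A => (P A).eval 0, ⟨fun γ hγ A => by simp [hP.inv γ hγ], fun A => ?_⟩, ?_⟩
  · have h := hPT (A * T)
    rw [famSlash, Tm_eq_T, mul_inv_cancel_right, hconst A, pSlash_C_T] at h
    simp [← h]
  · funext A
    rw [hQP, famSlash, Sm_eq_S, hconst (A * S⁻¹), pSlash_C_S, hconst A]
    rfl

variable {c : SL2Z → ℂ}

lemma IsCuspFunction.memC_constCoboundary (hc : IsCuspFunction Γ c) (h1 : -1 ∈ Γ)
    (hw : Even w) : MemC Γ w (constCoboundary w c) := by
  refine ⟨fun A => C (c A), ⟨fun A => degree_C_le.trans (by simp), fun γ hγ A => ?_, fun A => ?_⟩,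
    fun A => ?_, fun A => ?_⟩
  · simp [hc.mul_left γ hγ]
  · rw [negSL_eq_neg_one_mul, hc.mul_left _ h1, hw.neg_one_pow, one_smul]
  · simp [famSlash, Tm_eq_T, pSlash_C_T, inv_mem hc.T_mem A]
  · simp [constCoboundary, famSlash, Sm_eq_S, pSlash_C_S]

lemma IsCuspFunction.epsAct_constCoboundary (hc : IsCuspFunction Γ c) (h1 : -1 ∈ Γ)
    (hw : Even w) : epsAct w (constCoboundary w c) = constCoboundary w (c ∘ epsConj) := by
  funext A
  simp [epsAct, constCoboundary, hw.neg_pow, epsConj_mul, epsConj_S_inv, hc.mul_S_inv h1]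

lemma IsCuspFunction.eq_of_constCoboundary_eq_zero (hc : IsCuspFunction Γ c)
    (h : ∀ A, constCoboundary w c A = 0) (A B : SL2Z) : c A = c B := by
  refine apply_eq_of_S_mem_of_T_mem (fun A => ?_) hc.T_mem A B
  have hA := congrArg (eval 1) (h (A * S))
  simpa [constCoboundary, sub_eq_zero] using hA

end Coboundary

section Criterion

variable {Γ : Subgroup SL2Z}

lemma exists_isCuspFunction_comp_epsConj_eq_neg (hε : ∀ γ ∈ Γ, epsConj γ ∈ Γ) {A₀ : SL2Z}
    (hA₀ : cusp Γ (epsConj A₀) ≠ cusp Γ A₀) :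
    ∃ c, IsCuspFunction Γ c ∧ c ∘ epsConj = -c ∧ c A₀ = 1 := by
  set φ : SL2Z → ℂ := ({cusp Γ A₀} : Set _).indicator 1 ∘ cusp Γ
  have hφ : IsCuspFunction Γ φ := .of_comp_cusp _
  refine ⟨φ - φ ∘ epsConj, hφ.sub (hφ.comp_epsConj hε), ?_, ?_⟩
  · funext A
    simp [epsConj_epsConj]
  · simp [φ, hA₀]

theorem epsMinus_eq_zero_iff (hΓ : IsCongruenceSubgroup Γ) (h1 : -1 ∈ Γ)
    (hε : ∀ γ ∈ Γ, epsConj γ ∈ Γ) {w : ℕ} (hw : Even w) :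
    (∀ Q, MemC Γ w Q → (∀ A, epsAct w Q A = -Q A) → ∀ A, Q A = 0) ↔
      ∀ A, cusp Γ (epsConj A) = cusp Γ A := by
  constructor
  · intro hzero
    by_contra! ⟨A₀, hA₀⟩
    obtain ⟨c, hc, hcε, hcA₀⟩ := exists_isCuspFunction_comp_epsConj_eq_neg hε hA₀
    have hQ := hzero _ (hc.memC_constCoboundary h1 hw) (by
      simp [hc.epsAct_constCoboundary h1 hw, hcε, constCoboundary_neg])
    have hconst := hc.eq_of_constCoboundary_eq_zero hQ (epsConj A₀) A₀
    have hanti := congrFun hcε A₀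
    norm_num [hconst, hcA₀] at hanti
  · intro hstab Q hQ hεQ A
    obtain ⟨c, hc, rfl⟩ := hQ.exists_isCuspFunction hΓ
    have hfix : c ∘ epsConj = c := funext fun A => hc.eq_of_cusp_eq (hstab A)
    have hA := hεQ A
    rw [hc.epsAct_constCoboundary h1 hw, hfix] at hA
    exact self_eq_neg.mp hA

end Criterion

lemma Int.exists_dvd_mul_add_iff (a b n : ℤ) : (∃ x, n ∣ a * x + b) ↔ (Int.gcd a n : ℤ) ∣ b := by
  constructor
  · rintro ⟨x, hx⟩
    simpa using dvd_sub ((Int.gcd_dvd_right a n).trans hx) ((Int.gcd_dvd_left a n).mul_right x)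
  · rintro ⟨t, ht⟩
    refine ⟨-(Int.gcdA a n * t), Int.gcdB a n * t, ?_⟩
    linear_combination ht + t * Int.gcd_eq_gcd_ab a n

lemma cusp_epsConj_eq_iff_Gamma0 (N : ℕ) (A : SL2Z) :
    cusp (Gamma0 N) (epsConj A) = cusp (Gamma0 N) A ↔
      (Int.gcd (A 1 0 ^ 2) N : ℤ) ∣ 2 * A 1 0 * A 1 1 := by
  rw [cusp_eq_iff, ← Int.exists_dvd_mul_add_iff]
  refine exists_congr fun n => ?_
  have hrow : (A * T ^ n) 1 0 = A 1 0 ∧ (A * T ^ n) 1 1 = A 1 0 * n + A 1 1 := by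
    simp [coe_T_zpow, mul_apply, Fin.sum_univ_two]
  rw [mul_inv_mem_Gamma0_iff, hrow.1, hrow.2]
  show (N : ℤ) ∣ A 1 0 * A 1 1 - (A 1 0 * n + A 1 1) * -A 1 0 ↔ _
  exact Iff.of_eq (congrArg _ (by ring))

lemma forall_cusp_epsConj_eq_iff_Gamma0 (N : ℕ) :
    (∀ A, cusp (Gamma0 N) (epsConj A) = cusp (Gamma0 N) A) ↔
      ∀ m : ℕ, Nat.gcd (m ^ 2) N ∣ 2 * m := by
  simp_rw [cusp_epsConj_eq_iff_Gamma0]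
  constructor
  · intro h m
    have hm : (Int.gcd ((m : ℤ) ^ 2) N : ℤ) ∣ 2 * m * 1 :=
      h ⟨!![1, 0; (m : ℤ), 1], by simp [Matrix.det_fin_two_of]⟩
    rw [mul_one] at hm
    exact_mod_cast hm
  · intro h A
    refine Dvd.dvd.mul_right (Int.natCast_dvd.mpr ?_) _
    simpa [Int.gcd, Int.natAbs_mul, Int.natAbs_pow] using h (A 1 0).natAbs

lemma Nat.gcd_sq_dvd_two_mul_of_squarefree {e N' : ℕ} (hodd : Odd N') (hsq : Squarefree N')
    (he : e ≤ 3) (m : ℕ) : Nat.gcd (m ^ 2) (2 ^ e * N') ∣ 2 * m := by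
  rcases eq_or_ne m 0 with rfl | hm
  · simp
  have hN' : N' ≠ 0 := hodd.pos.ne'
  rw [← Nat.factorization_le_iff_dvd (Nat.gcd_ne_zero_right (by positivity)) (by positivity),
    Nat.factorization_gcd (by positivity) (by positivity)]
  intro p
  simp only [Finsupp.inf_apply, Nat.factorization_pow,
    Nat.factorization_mul (pow_ne_zero e two_ne_zero) hN', Nat.factorization_mul two_ne_zero hm,
    Finsupp.smul_apply, Finsupp.add_apply, smul_eq_mul, Nat.prime_two.factorization,
    Finsupp.single_apply]
  have h1 : N'.factorization p ≤ 1 := (Nat.squarefree_iff_factorization_le_one hN').mp hsq p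
  rcases eq_or_ne 2 p with rfl | hp
  · have h2 : N'.factorization 2 = 0 :=
      Nat.factorization_eq_zero_of_not_dvd hodd.not_two_dvd_nat
    simp only [if_true, h2]
    omega
  · simp only [hp, if_false]
    omega

lemma Nat.exists_eq_two_pow_mul_of_forall_gcd_sq_dvd {N : ℕ} (hN : N ≠ 0)
    (h : ∀ m : ℕ, Nat.gcd (m ^ 2) N ∣ 2 * m) :
    ∃ e N' : ℕ, N = 2 ^ e * N' ∧ Odd N' ∧ Squarefree N' ∧ e ≤ 3 := by
  have hodd : Odd (ordCompl[2] N) :=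
    Nat.odd_iff.mpr (Nat.two_dvd_ne_zero.mp (Nat.not_dvd_ordCompl Nat.prime_two hN))
  refine ⟨N.factorization 2, ordCompl[2] N, (Nat.ordProj_mul_ordCompl_eq_self N 2).symm, hodd,
    ?_, ?_⟩
  · rw [Nat.squarefree_iff_prime_squarefree]
    intro p hp hpp
    have hp2 : p ∣ 2 := by
      have hdvd := h p
      rw [Nat.gcd_eq_left (by rw [sq]; exact hpp.trans (Nat.ordCompl_dvd N 2)), sq,
        mul_comm 2] at hdvd
      exact Nat.dvd_of_mul_dvd_mul_left hp.pos hdvd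
    rw [(Nat.prime_dvd_prime_iff_eq hp Nat.prime_two).mp hp2] at hpp
    exact hodd.not_two_dvd_nat ((dvd_mul_right 2 2).trans hpp)
  · by_contra! he
    have h16 : 2 ^ 4 ∣ N := (pow_dvd_pow 2 he).trans (Nat.ordProj_dvd N 2)
    have hdvd := h 4
    rw [Nat.gcd_eq_left (by simpa using h16)] at hdvd
    norm_num at hdvd

lemma Nat.forall_gcd_sq_dvd_two_mul_iff {N : ℕ} (hN : N ≠ 0) :
    (∀ m : ℕ, Nat.gcd (m ^ 2) N ∣ 2 * m) ↔
      ∃ e N' : ℕ, N = 2 ^ e * N' ∧ Odd N' ∧ Squarefree N' ∧ e ≤ 3 := by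
  refine ⟨Nat.exists_eq_two_pow_mul_of_forall_gcd_sq_dvd hN, ?_⟩
  rintro ⟨e, N', rfl, hodd, hsq, he⟩
  exact Nat.gcd_sq_dvd_two_mul_of_squarefree hodd hsq he

theorem statement10 (N : ℕ) (hN : 1 ≤ N) (k : ℤ) (hke : Even k)
    (w : ℕ) (hw : (w : ℤ) = k - 2) :
    (∀ Q : SL2Z → Polynomial ℂ, MemC (CongruenceSubgroup.Gamma0 N) w Q →
        (∀ A, epsAct w Q A = -Q A) → ∀ A, Q A = 0) ↔
      ∃ e N' : ℕ, N = 2 ^ e * N' ∧ Odd N' ∧ Squarefree N' ∧ e ≤ 3 := by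
  have : NeZero N := ⟨by omega⟩
  have hwe : Even w := by exact_mod_cast (hw ▸ hke.sub even_two : Even (w : ℤ))
  rw [epsMinus_eq_zero_iff (Gamma0_is_congruence N) (neg_one_mem_Gamma0 N)
    (fun _ => epsConj_mem_Gamma0) hwe, forall_cusp_epsConj_eq_iff_Gamma0,
    Nat.forall_gcd_sq_dvd_two_mul_iff (by omega)]

end
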